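/- Let ⟨x,y⟩₁ = −x₀y₀ + x₁y₁ + x₂y₂ + x₃y₃ + x₄y₄ denote the Lorentzian bilinear form on ℝ⁵. Let a, b be nonzero real numbers and c a real number with c² − 1/a² − 1/b² = 1, and define Θ(t,u) = (c, cos(a t)/a, sin(a t)/a, cos(b u)/b, sin(b u)/b). Then for all (t,u): ⟨Θ, Θ⟩₁ = −1 (so Θ takes values in the hyperbolic space H⁴ = {x ∈ ℝ⁵ : ⟨x,x⟩₁ = −1}), and ⟨∂ₜΘ, ∂ₜΘ⟩₁ = 1, ⟨∂ᵤΘ, ∂ᵤΘ⟩₁ = 1, ⟨∂ₜΘ, ∂ᵤΘ⟩₁ = 0. -/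

import Mathlib

/-- The Lorentzian bilinear form on `ℝ⁵` with timelike coordinate `x₀`. -/
def lor5 (x y : Fin 5 → ℝ) : ℝ :=
  -(x 0 * y 0) + x 1 * y 1 + x 2 * y 2 + x 3 * y 3 + x 4 * y 4

open Real

theorem lor5_vecCons (x₀ x₁ x₂ x₃ x₄ y₀ y₁ y₂ y₃ y₄ : ℝ) :
    lor5 ![x₀, x₁, x₂, x₃, x₄] ![y₀, y₁, y₂, y₃, y₄] =
      -(x₀ * y₀) + x₁ * y₁ + x₂ * y₂ + x₃ * y₃ + x₄ * y₄ :=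
  rfl

theorem hasDerivAt_vecEmpty {𝕜 E : Type*} [NontriviallyNormedField 𝕜] [NormedAddCommGroup E]
    [NormedSpace 𝕜 E] (x : 𝕜) : HasDerivAt (fun _ : 𝕜 => (![] : Fin 0 → E)) ![] x :=
  (hasDerivAt_const x ![]).congr_deriv (Subsingleton.elim _ _)

theorem hasDerivAt_cos_mul_div {a : ℝ} (ha : a ≠ 0) (t : ℝ) :
    HasDerivAt (fun t => cos (a * t) / a) (-sin (a * t)) t := by
  simpa [neg_div, mul_div_cancel_right₀ _ ha] using
    ((hasDerivAt_id t).const_mul a).cos.div_const a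

theorem hasDerivAt_sin_mul_div {a : ℝ} (ha : a ≠ 0) (t : ℝ) :
    HasDerivAt (fun t => sin (a * t) / a) (cos (a * t)) t := by
  simpa [mul_div_cancel_right₀ _ ha] using ((hasDerivAt_id t).const_mul a).sin.div_const a

theorem cos_div_sq_add_sin_div_sq (a x : ℝ) :
    (cos x / a) ^ 2 + (sin x / a) ^ 2 = 1 / a ^ 2 := by
  rw [div_pow, div_pow, ← add_div, cos_sq_add_sin_sq]

/-- Case (1) of Proposition 4.3: the product-of-circles surface is a unit-speed
orthogonal parametrization lying in `H⁴ ⊂ ℝ⁵₁`. -/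
theorem stmt_7 (a b c : ℝ) (ha : a ≠ 0) (hb : b ≠ 0)
    (hc : c ^ 2 - 1 / a ^ 2 - 1 / b ^ 2 = 1)
    (Θ : ℝ → ℝ → Fin 5 → ℝ)
    (hΘ : ∀ t u : ℝ, Θ t u =
      ![c, Real.cos (a * t) / a, Real.sin (a * t) / a,
        Real.cos (b * u) / b, Real.sin (b * u) / b]) :
    ∀ t u : ℝ,
      lor5 (Θ t u) (Θ t u) = -1 ∧
      lor5 (deriv (fun t' => Θ t' u) t) (deriv (fun t' => Θ t' u) t) = 1 ∧
      lor5 (deriv (fun u' => Θ t u') u) (deriv (fun u' => Θ t u') u) = 1 ∧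
      lor5 (deriv (fun t' => Θ t' u) t) (deriv (fun u' => Θ t u') u) = 0 := by
  intro t u
  have hΘ_t : HasDerivAt (fun t' => Θ t' u) ![0, -sin (a * t), cos (a * t), 0, 0] t := by
    simp only [hΘ]
    exact (hasDerivAt_const t c).finCons <| (hasDerivAt_cos_mul_div ha t).finCons <|
      (hasDerivAt_sin_mul_div ha t).finCons <| (hasDerivAt_const t _).finCons <|
      (hasDerivAt_const t _).finCons <| hasDerivAt_vecEmpty t
  have hΘ_u : HasDerivAt (fun u' => Θ t u') ![0, 0, 0, -sin (b * u), cos (b * u)] u := by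
    simp only [hΘ]
    exact (hasDerivAt_const u c).finCons <| (hasDerivAt_const u _).finCons <|
      (hasDerivAt_const u _).finCons <| (hasDerivAt_cos_mul_div hb u).finCons <|
      (hasDerivAt_sin_mul_div hb u).finCons <| hasDerivAt_vecEmpty u
  rw [hΘ_t.deriv, hΘ_u.deriv, hΘ, lor5_vecCons, lor5_vecCons, lor5_vecCons, lor5_vecCons]
  refine ⟨?_, ?_, ?_, by ring⟩
  · linear_combination cos_div_sq_add_sin_div_sq a (a * t) +
      cos_div_sq_add_sin_div_sq b (b * u) - hc
  · linear_combination sin_sq_add_cos_sq (a * t)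
  · linear_combination sin_sq_add_cos_sq (b * u)
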